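/- arXiv:0805.1495 — 4 statements merged into one kernel-verified Lean document; each statement's English description precedes it below -/
import Mathlib

section
/- Let p and q be Laurent polynomials in ℤ[t,t⁻¹], each with all coefficients nonnegative and each satisfying the non-cancellation property. If the difference p − q is invariant under the bar involution t ↦ t⁻¹ (i.e. p(t) − q(t) = p(t⁻¹) − q(t⁻¹)), then p = q. (This is the key step in the proof of the uniqueness of weight polynomials of Verdier self-dual mixed tilting sheaves, Proposition 4.2 of the paper.) -/
/-!
Comparing the coefficients of `tⁱ` on both sides of `invert (p - q) = p - q` gives
`p₋ᵢ - q₋ᵢ = pᵢ - qᵢ`. By non-cancellation, at most one of `pᵢ, p₋ᵢ` and at most one of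
`qᵢ, q₋ᵢ` is nonzero. If the surviving coefficients sit in the same degree the equation reads
`pᵢ = qᵢ` directly; if they sit in opposite degrees it equates a nonnegative integer with a
nonpositive one, so both vanish.
-/

open LaurentPolynomial

/-- A Laurent polynomial `p ∈ ℤ[t,t⁻¹]` has the *non-cancellation property* if for every
integer `i`, the coefficients of `t^i` and `t^(-i)` in `p` are not both nonzero. -/
def NonCancellation (p : LaurentPolynomial ℤ) : Prop :=
  ∀ i : ℤ, p.coeff i = 0 ∨ p.coeff (-i) = 0

theorem eq_of_sub_eq_sub_of_nonneg {α : Type*} [AddCommGroup α] [PartialOrder α]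
    [IsOrderedAddMonoid α] {a b c d : α} (ha : 0 ≤ a) (hb : 0 ≤ b) (hc : 0 ≤ c) (hd : 0 ≤ d)
    (hab : a = 0 ∨ b = 0) (hcd : c = 0 ∨ d = 0) (h : b - d = a - c) : a = c := by
  rw [sub_eq_sub_iff_add_eq_add] at h
  rcases hab with rfl | rfl <;> rcases hcd with rfl | rfl <;> simp only [add_zero, zero_add] at h
  · rfl
  · exact ((add_eq_zero_iff_of_nonneg hb hc).1 h).2.symm
  · exact ((add_eq_zero_iff_of_nonneg ha hd).1 h.symm).1
  · exact h.symm

theorem LaurentPolynomial.coeff_neg_of_invert_eq_self {R : Type*} [CommSemiring R]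
    {f : R[T;T⁻¹]} (hf : invert f = f) (i : ℤ) : f.coeff (-i) = f.coeff i := by
  rw [← invert_apply, hf]

/-- If `p, q ∈ ℤ[t,t⁻¹]` both have nonnegative coefficients and both satisfy the
non-cancellation property, and the difference `p - q` is invariant under the bar involution
`t ↦ t⁻¹`, then `p = q`.  (Key step in the uniqueness of weight polynomials of Verdier
self-dual mixed tilting sheaves, Proposition 4.2.) -/
theorem eq_of_nonCancellation_of_bar_invariant_sub
    (p q : LaurentPolynomial ℤ)
    (hp : ∀ n : ℤ, 0 ≤ p.coeff n) (hq : ∀ n : ℤ, 0 ≤ q.coeff n)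
    (hpc : NonCancellation p) (hqc : NonCancellation q)
    (hbar : invert (p - q) = p - q) :
    p = q := by
  ext i
  have hi : p.coeff (-i) - q.coeff (-i) = p.coeff i - q.coeff i := by
    simpa only [AddMonoidAlgebra.coeff_sub, Finsupp.coe_sub, Pi.sub_apply]
      using coeff_neg_of_invert_eq_self hbar i
  exact eq_of_sub_eq_sub_of_nonneg (hp i) (hp (-i)) (hq i) (hq (-i)) (hpc i) (hqc i) hi
end

section
/- Let I be a finite partially ordered set, α ∈ I, and let M : I × I → ℤ[t,t⁻¹] be a transition matrix, i.e. M(β,β) = 1 for all β and M(β,γ) = 0 unless γ ≤ β. Then there is at most one family W : I → ℤ[t,t⁻¹] such that: (i) W(β) = 0 unless β ≤ α; (ii) all coefficients of every W(β) are nonnegative; (iii) W(α) = 1; (iv) for every β < α the Laurent polynomial W(β) has the non-cancellation property; and (v) W satisfies the self-duality equation: for every γ ∈ I, W(γ)(t) = Σ_{β∈I} W(β)(t⁻¹)·M(β,γ). (This is the combinatorial content of Proposition 4.2 of the paper: a Verdier self-dual mixed tilting extension with the non-cancellation property has uniquely determined weight polynomials.) -/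
/-!
Argue by downward induction on `γ`.  Once `W` and `W'` agree strictly above `γ`, unitriangularity
of `M` reduces the two self-duality equations at `γ` to `D = invert D` for `D := W γ - W' γ`, so
the coefficients of `D` at `i` and `-i` coincide.  By non-cancellation one of these coefficients
of `W γ` vanishes, making the common value `≤ 0`; symmetrically it is `≥ 0`, hence `D = 0`.
-/

open LaurentPolynomial

namespace LaurentPolynomial

theorem coeff_sub_nonpos_of_invert_eq {p q : ℤ[T;T⁻¹]} (hp : NonCancellation p)
    (hq : ∀ n, 0 ≤ q.coeff n) (hpq : invert (p - q) = p - q) (i : ℤ) :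
    (p - q).coeff i ≤ 0 := by
  rcases hp i with hi | hi
  · simpa [hi] using hq i
  · rw [← hpq, invert_apply]
    simpa [hi] using hq (-i)

theorem eq_of_invert_sub_eq {p q : ℤ[T;T⁻¹]} (hp : NonCancellation p) (hq : NonCancellation q)
    (hp_nonneg : ∀ n, 0 ≤ p.coeff n) (hq_nonneg : ∀ n, 0 ≤ q.coeff n)
    (hpq : invert (p - q) = p - q) : p = q := by
  have hqp : invert (q - p) = q - p := by
    rw [← neg_sub, map_neg, hpq]
  ext i
  have h₁ := coeff_sub_nonpos_of_invert_eq hp hq_nonneg hpq i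
  have h₂ := coeff_sub_nonpos_of_invert_eq hq hp_nonneg hqp i
  simp only [AddMonoidAlgebra.coeff_sub, Finsupp.coe_sub, Pi.sub_apply] at h₁ h₂
  omega

theorem invert_sub_eq_self_of_eqOn_Ioi {R I : Type*} [CommRing R] [Fintype I]
    [PartialOrder I] {M : I → I → R[T;T⁻¹]} (hMdiag : ∀ β, M β β = 1)
    (hMtri : ∀ β γ, ¬ γ ≤ β → M β γ = 0)
    {W W' : I → R[T;T⁻¹]} (hW : ∀ γ, W γ = ∑ β, invert (W β) * M β γ)
    (hW' : ∀ γ, W' γ = ∑ β, invert (W' β) * M β γ) {γ : I}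
    (hgt : ∀ β, γ < β → W β = W' β) :
    invert (W γ - W' γ) = W γ - W' γ := by
  symm
  calc W γ - W' γ = ∑ β, (invert (W β) - invert (W' β)) * M β γ := by
        rw [hW γ, hW' γ, ← Finset.sum_sub_distrib]
        simp only [sub_mul]
    _ = (invert (W γ) - invert (W' γ)) * M γ γ := by
        refine Finset.sum_eq_single γ (fun β _ hβγ ↦ ?_) (by simp)
        by_cases hγβ : γ ≤ β
        · rw [hgt β (lt_of_le_of_ne hγβ (Ne.symm hβγ)), sub_self, zero_mul]
        · rw [hMtri β γ hγβ, mul_zero]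
    _ = invert (W γ - W' γ) := by rw [hMdiag, mul_one, map_sub]

end LaurentPolynomial

/-- Let `I` be a finite poset, `α ∈ I`, and `M : I × I → ℤ[t,t⁻¹]` a transition matrix
(`M β β = 1`, and `M β γ = 0` unless `γ ≤ β`).  There is at most one family
`W : I → ℤ[t,t⁻¹]` such that: (i) `W β = 0` unless `β ≤ α`; (ii) all coefficients of each
`W β` are nonnegative; (iii) `W α = 1`; (iv) `W β` has the non-cancellation property for all
`β < α`; (v) the self-duality equation `W γ (t) = ∑ β, W β (t⁻¹) · M β γ` holds.
(Combinatorial content of Proposition 4.2.) -/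
theorem weight_polynomials_unique {I : Type*} [Fintype I] [PartialOrder I] (α : I)
    (M : I → I → LaurentPolynomial ℤ)
    (hMdiag : ∀ β, M β β = 1)
    (hMtri : ∀ β γ, ¬ γ ≤ β → M β γ = 0)
    (W W' : I → LaurentPolynomial ℤ)
    (hWsupp : ∀ β, ¬ β ≤ α → W β = 0)
    (hW'supp : ∀ β, ¬ β ≤ α → W' β = 0)
    (hWpos : ∀ β, ∀ n : ℤ, 0 ≤ (W β).coeff n)
    (hW'pos : ∀ β, ∀ n : ℤ, 0 ≤ (W' β).coeff n)
    (hWinit : W α = 1)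
    (hW'init : W' α = 1)
    (hWnc : ∀ β, β < α → NonCancellation (W β))
    (hW'nc : ∀ β, β < α → NonCancellation (W' β))
    (hWsd : ∀ γ, W γ = ∑ β, invert (W β) * M β γ)
    (hW'sd : ∀ γ, W' γ = ∑ β, invert (W' β) * M β γ) :
    W = W' := by
  funext γ
  induction γ using WellFoundedGT.induction with
  | _ γ ih =>
    by_cases hγα : γ ≤ α
    · rcases hγα.eq_or_lt with rfl | hlt
      · rw [hWinit, hW'init]
      · exact eq_of_invert_sub_eq (hWnc γ hlt) (hW'nc γ hlt) (hWpos γ) (hW'pos γ)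
          (invert_sub_eq_self_of_eqOn_Ioi hMdiag hMtri hWsd hW'sd ih)
    · rw [hWsupp γ hγα, hW'supp γ hγα]
end

section
/- Let I be a finite partially ordered set, α ∈ I, and let M : I × I → ℤ[t,t⁻¹] be a transition matrix, i.e. M(β,β) = 1 for all β and M(β,γ) = 0 unless γ ≤ β. Then there is at most one family W : I → ℤ[t,t⁻¹] such that: (i) W(β) = 0 unless β ≤ α; (ii) W(α) = 1; (iii) for every β < α all coefficients of W(β) in degrees ≤ 0 vanish (W(β) ∈ tℤ[t]); and (iv) W satisfies the self-duality equation: for every γ ∈ I, W(γ)(t) = Σ_{β∈I} W(β)(t⁻¹)·M(β,γ). (This is the uniqueness of weight polynomials for a Verdier self-dual mixed tilting sheaf satisfying the weight condition (W), equivalently condition (W') of Lemma 3.4, used in Theorem 5.1 of the paper.) -/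
/-!
The difference `D = W - W'` of two solutions again satisfies the (linear) self-duality
equation. Because `M` is unitriangular, descending induction along the finite poset shows that
each `D γ` is bar-invariant once all `D β` with `β > γ` vanish. But every `D γ` lies in `tℤ[t]`
(it is `0` for `γ = α` and for `γ ≰ α`), and a bar-invariant element of `tℤ[t]` is `0`.
-/

open LaurentPolynomial

namespace LaurentPolynomial

variable {R : Type*} [CommSemiring R]

lemma eq_zero_of_invert_eq_self_of_coeff_nonpos {f : R[T;T⁻¹]} (hf : invert f = f)
    (hpos : ∀ n : ℤ, n ≤ 0 → f.coeff n = 0) : f = 0 := by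
  ext n
  rcases le_or_gt n 0 with hn | hn
  · exact hpos n hn
  · rw [← hf, invert_apply]
    exact hpos (-n) (by omega)

end LaurentPolynomial

section SelfDuality

variable {R I : Type*} [Fintype I]

def IsSelfDualFamily [CommSemiring R] (M : I → I → R[T;T⁻¹]) (W : I → R[T;T⁻¹]) : Prop :=
  ∀ γ, W γ = ∑ β, invert (W β) * M β γ

lemma IsSelfDualFamily.sub [CommRing R] {M : I → I → R[T;T⁻¹]} {W W' : I → R[T;T⁻¹]}
    (hW : IsSelfDualFamily M W) (hW' : IsSelfDualFamily M W') :
    IsSelfDualFamily M (W - W') := fun γ => by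
  simp only [Pi.sub_apply, hW γ, hW' γ, map_sub, sub_mul, Finset.sum_sub_distrib]

variable [CommSemiring R] [PartialOrder I] {M : I → I → R[T;T⁻¹]} {D : I → R[T;T⁻¹]}

lemma IsSelfDualFamily.invert_eq_self_of_forall_gt (hMdiag : ∀ β, M β β = 1)
    (hMtri : ∀ β γ, ¬ γ ≤ β → M β γ = 0) (hD : IsSelfDualFamily M D) {γ : I}
    (hgt : ∀ β, γ < β → D β = 0) : invert (D γ) = D γ := by
  symm
  calc D γ = ∑ β, invert (D β) * M β γ := hD γ
    _ = invert (D γ) * M γ γ := by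
      refine Finset.sum_eq_single γ (fun β _ hβ => ?_) (fun h => absurd (Finset.mem_univ γ) h)
      by_cases hγβ : γ ≤ β
      · rw [hgt β (lt_of_le_of_ne hγβ (Ne.symm hβ)), map_zero, zero_mul]
      · rw [hMtri β γ hγβ, mul_zero]
    _ = invert (D γ) := by rw [hMdiag, mul_one]

theorem IsSelfDualFamily.eq_zero_of_coeff_nonpos (hMdiag : ∀ β, M β β = 1)
    (hMtri : ∀ β γ, ¬ γ ≤ β → M β γ = 0) (hD : IsSelfDualFamily M D)
    (hpos : ∀ γ, ∀ n : ℤ, n ≤ 0 → (D γ).coeff n = 0) : D = 0 := by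
  funext γ
  induction γ using WellFoundedGT.induction with
  | _ γ ih =>
    exact eq_zero_of_invert_eq_self_of_coeff_nonpos
      (hD.invert_eq_self_of_forall_gt hMdiag hMtri ih) (hpos γ)

end SelfDuality

/-- Let `I` be a finite poset, `α ∈ I`, and `M : I × I → ℤ[t,t⁻¹]` a transition matrix
(`M β β = 1`, and `M β γ = 0` unless `γ ≤ β`).  There is at most one family
`W : I → ℤ[t,t⁻¹]` such that: (i) `W β = 0` unless `β ≤ α`; (ii) `W α = 1`;
(iii) for every `β < α` the Laurent polynomial `W β` lies in `tℤ[t]` (all coefficients in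
degrees `≤ 0` vanish); (iv) the self-duality equation `W γ (t) = ∑ β, W β (t⁻¹) · M β γ`
holds.  (Uniqueness of weight polynomials for a Verdier self-dual mixed tilting sheaf
satisfying condition (W'), used in Theorem 5.1.) -/
theorem weight_polynomials_unique_of_W' {I : Type*} [Fintype I] [PartialOrder I] (α : I)
    (M : I → I → LaurentPolynomial ℤ)
    (hMdiag : ∀ β, M β β = 1)
    (hMtri : ∀ β γ, ¬ γ ≤ β → M β γ = 0)
    (W W' : I → LaurentPolynomial ℤ)
    (hWsupp : ∀ β, ¬ β ≤ α → W β = 0)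
    (hW'supp : ∀ β, ¬ β ≤ α → W' β = 0)
    (hWinit : W α = 1)
    (hW'init : W' α = 1)
    (hWpos : ∀ β, β < α → ∀ n : ℤ, n ≤ 0 → (W β).coeff n = 0)
    (hW'pos : ∀ β, β < α → ∀ n : ℤ, n ≤ 0 → (W' β).coeff n = 0)
    (hWsd : ∀ γ, W γ = ∑ β, invert (W β) * M β γ)
    (hW'sd : ∀ γ, W' γ = ∑ β, invert (W' β) * M β γ) :
    W = W' := by
  have hD : IsSelfDualFamily M (W - W') := IsSelfDualFamily.sub hWsd hW'sd
  have hpos : ∀ γ, ∀ n : ℤ, n ≤ 0 → ((W - W') γ).coeff n = 0 := by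
    intro γ n hn
    by_cases hle : γ ≤ α
    · rcases hle.eq_or_lt with rfl | hlt
      · simp [hWinit, hW'init]
      · simp [AddMonoidAlgebra.coeff_sub, hWpos γ hlt n hn, hW'pos γ hlt n hn]
    · simp [hWsupp γ hle, hW'supp γ hle]
  exact sub_eq_zero.mp (hD.eq_zero_of_coeff_nonpos hMdiag hMtri hpos)
end

section
/- Let G be a group and F : G → G a group automorphism. Suppose there is a finite chain of subgroups G = G₀ ⊇ G₁ ⊇ ⋯ ⊇ Gₙ = {1} such that for each i: F(Gᵢ) = Gᵢ, the subgroup Gᵢ₊₁ is normal in Gᵢ, the quotient Gᵢ/Gᵢ₊₁ is abelian, and the group homomorphism of Gᵢ/Gᵢ₊₁ induced by x ↦ x·F(x)⁻¹ is surjective. Then for every a ∈ G there exists b ∈ G with a = b·F(b)⁻¹. (This is the group-theoretic dévissage underlying Proposition 2.8 of the paper: the vanishing of H¹(ℤ·Frob, Aut¹) for the unipotent group Aut¹ filtered by Frobenius-stable subgroups whose abelian subquotients carry Frobenius action of nonzero weight, which gives the uniqueness of the mixed structure on an indecomposable mixed tilting extension.) -/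
/-! Dévissage along the filtration: if `a ∈ Gᵢ`, surjectivity on `Gᵢ/Gᵢ₊₁` gives `b ∈ Gᵢ`
with `a ≡ b · F(b)⁻¹`, and then `b⁻¹ · a · F(b)` lies in `Gᵢ₊₁`, where it is a coboundary
`e · F(e)⁻¹` by descending induction; hence `a = (b e) · F(b e)⁻¹`. -/

theorem exists_coboundary_of_extension {G : Type*} [Group G] (F : G →* G) {H K : Subgroup G}
    (hFK : ∀ b ∈ K, F b ∈ K) (hHK : H ≤ K)
    (hnormal : ∀ x ∈ K, ∀ y ∈ H, x * y * x⁻¹ ∈ H)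
    (hsurj : ∀ a ∈ K, ∃ b ∈ K, (b * (F b)⁻¹)⁻¹ * a ∈ H)
    (hH : ∀ a ∈ H, ∃ e ∈ H, a = e * (F e)⁻¹) :
    ∀ a ∈ K, ∃ b ∈ K, a = b * (F b)⁻¹ := by
  intro a ha
  obtain ⟨b, hbK, hab⟩ := hsurj a ha
  have hconj : b⁻¹ * a * F b ∈ H := by
    have h := hnormal (F b)⁻¹ (K.inv_mem (hFK b hbK)) _ hab
    rwa [show (F b)⁻¹ * ((b * (F b)⁻¹)⁻¹ * a) * (F b)⁻¹⁻¹ = b⁻¹ * a * F b by group] at h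
  obtain ⟨e, heH, he⟩ := hH _ hconj
  refine ⟨b * e, K.mul_mem hbK (hHK heH), ?_⟩
  calc a = b * (b⁻¹ * a * F b) * (F b)⁻¹ := by group
    _ = b * e * (F (b * e))⁻¹ := by rw [he, map_mul]; group

theorem h1_trivial_of_filtration_general {G : Type*} [Group G] (F : G ≃* G) (n : ℕ)
    (Gs : Fin (n + 1) → Subgroup G)
    (htop : Gs 0 = ⊤)
    (hbot : Gs (Fin.last n) = ⊥)
    (hchain : ∀ i : Fin n, Gs i.succ ≤ Gs i.castSucc)
    (hF : ∀ i : Fin (n + 1), (Gs i).map F.toMonoidHom = Gs i)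
    (hnormal : ∀ i : Fin n, ∀ x ∈ Gs i.castSucc, ∀ y ∈ Gs i.succ,
      x * y * x⁻¹ ∈ Gs i.succ)
    (hsurj : ∀ i : Fin n, ∀ a ∈ Gs i.castSucc, ∃ b ∈ Gs i.castSucc,
      (b * (F b)⁻¹)⁻¹ * a ∈ Gs i.succ) :
    ∀ a : G, ∃ b : G, a = b * (F b)⁻¹ := by
  have hFmem (i : Fin (n + 1)) (b : G) (hb : b ∈ Gs i) : F b ∈ Gs i :=
    hF i ▸ Subgroup.mem_map_of_mem F.toMonoidHom hb
  have hall (i : Fin (n + 1)) : ∀ a ∈ Gs i, ∃ b ∈ Gs i, a = b * (F b)⁻¹ := by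
    induction i using Fin.reverseInduction with
    | last =>
      intro a ha
      rw [hbot, Subgroup.mem_bot] at ha
      exact ⟨1, Subgroup.one_mem _, by simp [ha]⟩
    | cast i ih =>
      exact exists_coboundary_of_extension F.toMonoidHom (hFmem _) (hchain i) (hnormal i)
        (hsurj i) ih
  intro a
  obtain ⟨b, -, hb⟩ := hall 0 a (htop ▸ Subgroup.mem_top a)
  exact ⟨b, hb⟩

/-- Let `G` be a group and `F : G ≃* G` an automorphism.  Suppose there is a finite chain of
subgroups `G = G₀ ⊇ G₁ ⊇ ⋯ ⊇ Gₙ = {1}` such that for each step: `F` preserves `Gᵢ`; `Gᵢ₊₁`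
is normal in `Gᵢ`; the quotient `Gᵢ/Gᵢ₊₁` is abelian (all commutators of elements of `Gᵢ`
lie in `Gᵢ₊₁`); and the homomorphism of `Gᵢ/Gᵢ₊₁` induced by `x ↦ x · F(x)⁻¹` is surjective
(every `a ∈ Gᵢ` is congruent to some `b · F(b)⁻¹` with `b ∈ Gᵢ` modulo `Gᵢ₊₁`).  Then every
element of `G` is of the form `b · F(b)⁻¹`, i.e. `H¹(ℤ·F, G)` is trivial.
(Group-theoretic dévissage underlying Proposition 2.8.) -/
theorem h1_trivial_of_filtration {G : Type*} [Group G] (F : G ≃* G) (n : ℕ)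
    (Gs : Fin (n + 1) → Subgroup G)
    (htop : Gs 0 = ⊤)
    (hbot : Gs (Fin.last n) = ⊥)
    (hchain : ∀ i : Fin n, Gs i.succ ≤ Gs i.castSucc)
    (hF : ∀ i : Fin (n + 1), (Gs i).map F.toMonoidHom = Gs i)
    (hnormal : ∀ i : Fin n, ∀ x ∈ Gs i.castSucc, ∀ y ∈ Gs i.succ,
      x * y * x⁻¹ ∈ Gs i.succ)
    (habelian : ∀ i : Fin n, ∀ x ∈ Gs i.castSucc, ∀ y ∈ Gs i.castSucc,
      x * y * x⁻¹ * y⁻¹ ∈ Gs i.succ)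
    (hsurj : ∀ i : Fin n, ∀ a ∈ Gs i.castSucc, ∃ b ∈ Gs i.castSucc,
      (b * (F b)⁻¹)⁻¹ * a ∈ Gs i.succ) :
    ∀ a : G, ∃ b : G, a = b * (F b)⁻¹ :=
  h1_trivial_of_filtration_general F n Gs htop hbot hchain hF hnormal hsurj
end
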